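/- arXiv:1204.1517 — 6 statements merged into one kernel-verified Lean document; each statement's English description precedes it below -/
import Mathlib

section
/- Let $x$ be a normal element of a $C^*$-algebra and suppose there is a sequence of surjective $*$-homomorphisms $\rho_n$ to finite-dimensional $C^*$-algebras such that $\|x\| = \lim_n \|\rho_n(x)\|$ for every element $x$. Then the spectrum of $x$ equals the closure of the union of the spectra of the $\rho_n(x)$. -/
open scoped CStarAlgebra in
/-- If a unital C*-algebra `A` admits surjective unital *-homomorphisms `ρ n` onto
finite-dimensional C*-algebras `B n` such that `‖a‖ = ⨆ n, ‖ρ n a‖` for all `a`, then for every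
normal element `x ∈ A`, the spectrum of `x` is the closure of the union of the spectra of the
`ρ n x`. -/
theorem spectrum_eq_closure_iUnion_of_finiteDim_approx
    {A : Type*} [CStarAlgebra A]
    {B : ℕ → Type*} [∀ n, CStarAlgebra (B n)] [∀ n, FiniteDimensional ℂ (B n)]
    (ρ : ∀ n, A →⋆ₐ[ℂ] B n)
    (hsurj : ∀ n, Function.Surjective (ρ n))
    (hnorm : ∀ a : A, ‖a‖ = ⨆ n, ‖ρ n a‖)
    (x : A) (hx : IsStarNormal x) :
    spectrum ℂ x = closure (⋃ n, spectrum ℂ (ρ n x)) := by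
  have hsub : ∀ n, spectrum ℂ ((ρ n) x) ⊆ spectrum ℂ x := fun n =>
    AlgHom.spectrum_apply_subset ((ρ n) : A →ₐ[ℂ] B n) x
  have hcont : ∀ n, Continuous (ρ n) := fun n =>
    AddMonoidHomClass.continuous_of_bound (ρ n) 1
      (fun a => by simpa using NonUnitalStarAlgHom.norm_apply_le (ρ n) a)
  apply Set.Subset.antisymm
  · intro lam hlam
    by_contra hlamC
    set C : Set ℂ := closure (⋃ n, spectrum ℂ ((ρ n) x)) with hC
    obtain ⟨ε, hε, hball⟩ : ∃ ε > 0, Metric.ball lam ε ∩ C = ∅ := by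
      have : Cᶜ ∈ nhds lam := isClosed_closure.isOpen_compl.mem_nhds hlamC
      obtain ⟨ε, hε, hb⟩ := Metric.mem_nhds_iff.mp this
      exact ⟨ε, hε, Set.eq_empty_of_subset_empty fun z ⟨hz1, hz2⟩ => hb hz1 hz2⟩
    set f : ℂ → ℂ := fun z => ((max 0 (1 - ε⁻¹ * dist z lam) : ℝ) : ℂ) with hf
    have hfc : Continuous f := by fun_prop
    have hfz : ∀ z ∈ C, f z = 0 := by
      intro z hz
      have hd : ε ≤ dist z lam := by
        by_contra h
        push_neg at h
        have hzb : z ∈ Metric.ball lam ε := by rw [Metric.mem_ball]; exact h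
        exact absurd (hball ▸ Set.mem_inter hzb hz) (Set.notMem_empty z)
      have h1 : (1 : ℝ) ≤ ε⁻¹ * dist z lam := by
        have := mul_le_mul_of_nonneg_left hd (inv_nonneg.mpr hε.le)
        rwa [inv_mul_cancel₀ hε.ne'] at this
      have : (1 : ℝ) - ε⁻¹ * dist z lam ≤ 0 := by linarith
      simp only [hf]
      norm_cast
      exact max_eq_left this
    have hflam : f lam = 1 := by simp [hf, hε.le]
    have hmap : ∀ n, (ρ n) (cfc f x) = 0 := by
      intro n
      rw [StarAlgHom.map_cfc (ρ n) f x (hfc.continuousOn) (hcont n)]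
      rw [show (0 : B n) = cfc (0 : ℂ → ℂ) ((ρ n) x) from (cfc_zero ℂ _).symm]
      exact cfc_congr fun z hz => hfz z (subset_closure (Set.mem_iUnion.mpr ⟨n, hz⟩))
    have hzero : cfc f x = 0 := by
      rw [← norm_eq_zero, hnorm (cfc f x)]
      simp [hmap]
    have h1 : (1 : ℝ) ≤ ‖cfc f x‖ := by
      have := norm_apply_le_norm_cfc f x hlam hfc.continuousOn hx
      rwa [hflam, norm_one] at this
    rw [hzero, norm_zero] at h1
    linarith
  · exact closure_minimal (Set.iUnion_subset hsub) (spectrum.isClosed x)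
end

section
/- Let $d \geq 1$ and for $k \in \mathbb{N}$ let $a_k \in M_{d_k}(\mathbb{C})$ with all $d_k \leq d$. Suppose $\lambda \in \mathbb{C}$ satisfies $\mathrm{dist}(\lambda, \bigcup_k \mathrm{sp}(a_k)) \geq r > 0$ and $\sup_k \|a_k\| \leq M$. Then $\|(a_k - \lambda)^{-1}\| \leq r^{-d} \sqrt{d} (d-1)! (M + |\lambda|)^{d-1}$ for all $k$. -/
open scoped Matrix.Norms.L2Operator

open scoped MatrixOrder ComplexOrder

/-!
Write `b = a - λ`. Every root of the characteristic polynomial of `b` has modulus at least `r`,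
so `|det b| ≥ r ^ n`. The eigenvalues of `bᴴ b` lie in `[0, ‖b‖²]` and multiply to `|det b|²`,
so each of them is at least `|det b|² / ‖b‖^(2(n-1))`; in the C⋆-algebra of matrices this
lower bound on `bᴴ b` is an upper bound on `‖b⁻¹‖`, giving `‖b⁻¹‖ ≤ ‖b‖^(n-1) / |det b|`
(sharper than the adjugate estimate). With `‖b‖ ≤ M + |λ|`, and `r ≤ M + |λ|` because the
spectrum is nonempty, the resulting bound `(M + |λ|)^(n-1) / r^n` only grows with `n ≤ d`.
-/

lemma Finset.prod_le_mul_pow_card_sub_one {ι : Type*} {s : Finset ι} {f : ι → ℝ} {B : ℝ}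
    (h0 : ∀ j ∈ s, 0 ≤ f j) (hB : ∀ j ∈ s, f j ≤ B) {i : ι} (hi : i ∈ s) :
    ∏ j ∈ s, f j ≤ f i * B ^ (s.card - 1) := by
  classical
  rw [← mul_prod_erase s f hi, ← card_erase_of_mem hi, ← prod_const]
  exact mul_le_mul_of_nonneg_left
    (prod_le_prod (fun j hj => h0 j (mem_of_mem_erase hj)) fun j hj => hB j (mem_of_mem_erase hj))
    (h0 i hi)

lemma pow_sub_one_div_pow_le_of_le {r E : ℝ} (hr : 0 < r) (hrE : r ≤ E) {m n : ℕ}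
    (hm : 1 ≤ m) (hmn : m ≤ n) : E ^ (m - 1) / r ^ m ≤ E ^ (n - 1) / r ^ n := by
  have hsplit (k : ℕ) (hk : 1 ≤ k) : E ^ (k - 1) / r ^ k = (E / r) ^ (k - 1) / r := by
    rw [div_pow, div_div, ← pow_succ, Nat.sub_add_cancel hk]
  rw [hsplit m hm, hsplit n (hm.trans hmn)]
  gcongr
  exact (one_le_div hr).2 hrE

lemma spectrum.le_norm_add_norm_of_forall_le_norm_sub {A : Type*} [NormedRing A] [NormedAlgebra ℂ A]
    [CompleteSpace A] [Nontrivial A] [NormOneClass A] (a : A) {lam : ℂ} {r : ℝ}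
    (h : ∀ z ∈ spectrum ℂ a, r ≤ ‖lam - z‖) : r ≤ ‖lam‖ + ‖a‖ := by
  obtain ⟨z, hz⟩ := spectrum.nonempty a
  calc r ≤ ‖lam - z‖ := h z hz
    _ ≤ ‖lam‖ + ‖z‖ := norm_sub_le lam z
    _ ≤ ‖lam‖ + ‖a‖ := add_le_add_right (spectrum.norm_le_norm_of_mem hz) _

lemma mul_norm_ringInverse_sq_le_one {A : Type*} [CStarAlgebra A] [PartialOrder A]
    [StarOrderedRing A] {b : A} (hb : IsUnit b) {c : ℝ} (hc : 0 ≤ c)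
    (h : algebraMap ℝ A c ≤ star b * b) : c * ‖Ring.inverse b‖ ^ 2 ≤ 1 := by
  set v := Ring.inverse b
  have hbv : b * v = 1 := Ring.mul_inverse_cancel b hb
  have hle : c • (star v * v) ≤ 1 := by
    have hleft : star v * algebraMap ℝ A c * v = c • (star v * v) := by
      simp [Algebra.algebraMap_eq_smul_one]
    have hright : star v * (star b * b) * v = 1 := by
      simp only [mul_assoc]
      rw [hbv, mul_one, ← star_mul, hbv, star_one]
    simpa only [hleft, hright] using star_left_conjugate_le_conjugate h v
  have hnonneg : 0 ≤ c • (star v * v) := smul_nonneg hc (star_mul_self_nonneg v)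
  have := (CStarAlgebra.norm_le_iff_le_algebraMap _ zero_le_one hnonneg).2 (by simpa using hle)
  rwa [norm_smul, CStarRing.norm_star_mul_self, Real.norm_of_nonneg hc, ← sq] at this

namespace Matrix

variable {n : Type*} [Fintype n] [DecidableEq n]

lemma pow_card_le_norm_det {K : Type*} [NormedField K] [IsAlgClosed K] (A : Matrix n n K)
    {r : ℝ} (hr : 0 ≤ r) (h : ∀ z ∈ spectrum K A, r ≤ ‖z‖) :
    r ^ Fintype.card n ≤ ‖A.det‖ := by
  lift r to NNReal using hr
  have hcard : A.charpoly.roots.card = Fintype.card n := by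
    rw [IsAlgClosed.card_roots_eq_natDegree, charpoly_natDegree_eq_dim]
  have hprod (s : Multiset K) : ‖s.prod‖₊ = (s.map (‖·‖₊)).prod :=
    map_multiset_prod (nnnormHom : K →*₀ NNReal) s
  rw [← NNReal.coe_pow, ← coe_nnnorm, NNReal.coe_le_coe, det_eq_prod_roots_charpoly, hprod,
    ← hcard, ← Multiset.card_map (‖·‖₊)]
  refine Multiset.pow_card_le_prod fun x hx => ?_
  obtain ⟨z, hz, rfl⟩ := Multiset.mem_map.1 hx
  exact h z (mem_spectrum_iff_isRoot_charpoly.2 (Polynomial.isRoot_of_mem_roots hz))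

lemma pow_card_le_norm_det_sub_algebraMap {K : Type*} [NormedField K] [IsAlgClosed K]
    (a : Matrix n n K) {lam : K} {r : ℝ} (hr : 0 ≤ r) (h : ∀ z ∈ spectrum K a, r ≤ ‖lam - z‖) :
    r ^ Fintype.card n ≤ ‖(a - algebraMap K _ lam).det‖ := by
  refine pow_card_le_norm_det _ hr fun z hz => ?_
  rw [← spectrum.sub_singleton_eq] at hz
  obtain ⟨w, hw, _, rfl, rfl⟩ := hz
  rw [norm_sub_rev]
  exact h w hw

lemma IsHermitian.eigenvalues_le_l2_opNorm {A : Matrix n n ℂ} (hA : A.IsHermitian) (i : n) :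
    hA.eigenvalues i ≤ ‖A‖ :=
  have : Nonempty n := ⟨i⟩
  (Real.le_norm_self _).trans (spectrum.norm_le_norm_of_mem (hA.eigenvalues_mem_spectrum_real i))

lemma prod_eigenvalues_conjTranspose_mul_self (b : Matrix n n ℂ) :
    ∏ i, (isHermitian_conjTranspose_mul_self b).eigenvalues i = ‖b.det‖ ^ 2 := by
  have h := (isHermitian_conjTranspose_mul_self b).det_eq_prod_eigenvalues
  rw [det_mul, det_conjTranspose, ← RCLike.ofReal_prod] at h
  apply RCLike.ofReal_injective (K := ℂ)
  rw [← h, RCLike.ofReal_pow, ← RCLike.mul_conj, mul_comm]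
  rfl

lemma l2_opNorm_inv_le (b : Matrix n n ℂ) :
    ‖b⁻¹‖ ≤ ‖b‖ ^ (Fintype.card n - 1) / ‖b.det‖ := by
  by_cases hdet : IsUnit b.det
  swap
  · rw [nonsing_inv_apply_not_isUnit _ hdet, norm_zero]
    positivity
  rcases isEmpty_or_nonempty n with hn | hn
  · rw [Subsingleton.elim b⁻¹ 0, norm_zero]
    positivity
  have hb : IsUnit b := (isUnit_iff_isUnit_det b).2 hdet
  set K := ‖b‖ ^ (Fintype.card n - 1) / ‖b.det‖
  have hbpos : 0 < ‖b‖ := norm_pos_iff.2 hb.ne_zero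
  have hK : 0 < K := div_pos (pow_pos hbpos _) (norm_pos_iff.2 hdet.ne_zero)
  have hH := isHermitian_conjTranspose_mul_self b
  have hμ (i : n) : K⁻¹ ^ 2 ≤ hH.eigenvalues i := by
    have := Finset.prod_le_mul_pow_card_sub_one (s := Finset.univ)
      (fun j _ => (posSemidef_conjTranspose_mul_self b).eigenvalues_nonneg j)
      (fun j _ => (hH.eigenvalues_le_l2_opNorm j).trans_eq (l2_opNorm_conjTranspose_mul_self b))
      (Finset.mem_univ i)
    rw [prod_eigenvalues_conjTranspose_mul_self, Finset.card_univ, ← sq] at this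
    rwa [inv_div, div_pow, div_le_iff₀ (pow_pos (pow_pos hbpos _) 2), ← pow_mul, mul_comm _ 2,
      pow_mul]
  have hc : algebraMap ℝ (Matrix n n ℂ) (K⁻¹ ^ 2) ≤ star b * b := by
    rw [star_eq_conjTranspose, algebraMap_le_iff_le_spectrum hH.isSelfAdjoint,
      hH.spectrum_real_eq_range_eigenvalues]
    rintro _ ⟨i, rfl⟩
    exact hμ i
  have := mul_norm_ringInverse_sq_le_one hb (by positivity) hc
  rwa [← nonsing_inv_eq_ringInverse, ← mul_pow, sq_le_one_iff₀ (by positivity),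
    inv_mul_le_iff₀ hK, mul_one] at this

end Matrix

theorem resolvent_uniform_bound_general
    (d : ℕ) (dk : ℕ → ℕ) (hdk : ∀ k, dk k ≤ d)
    (a : ∀ k, Matrix (Fin (dk k)) (Fin (dk k)) ℂ)
    (r M : ℝ) (lam : ℂ) (hr : 0 < r)
    (hdist : ∀ k, ∀ z ∈ spectrum ℂ (a k), r ≤ ‖lam - z‖)
    (hM : ∀ k, ‖a k‖ ≤ M) :
    ∀ k, ‖Ring.inverse (a k - algebraMap ℂ _ lam)‖ ≤
      r⁻¹ ^ d * Real.sqrt d * (Nat.factorial (d - 1)) * (M + ‖lam‖) ^ (d - 1) := by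
  intro k
  have hM0 : 0 ≤ M := (norm_nonneg _).trans (hM k)
  rcases isEmpty_or_nonempty (Fin (dk k)) with hempty | hne
  · rw [Subsingleton.elim (Ring.inverse _) 0, norm_zero]
    positivity
  set b := a k - algebraMap ℂ _ lam
  have hn : 1 ≤ dk k := Fin.pos_iff_nonempty.2 hne
  have hdet : r ^ dk k ≤ ‖b.det‖ := by
    simpa using Matrix.pow_card_le_norm_det_sub_algebraMap (a k) hr.le (hdist k)
  have hbM : ‖b‖ ≤ M + ‖lam‖ :=
    (norm_sub_le _ _).trans (by rw [norm_algebraMap']; linarith [hM k])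
  have hrM : r ≤ M + ‖lam‖ :=
    (spectrum.le_norm_add_norm_of_forall_le_norm_sub (a k) (hdist k)).trans (by linarith [hM k])
  have hsqrt : 1 ≤ Real.sqrt d := Real.one_le_sqrt.2 (by exact_mod_cast hn.trans (hdk k))
  have hfact : (1 : ℝ) ≤ Nat.factorial (d - 1) := by exact_mod_cast Nat.factorial_pos _
  rw [← Matrix.nonsing_inv_eq_ringInverse]
  calc ‖b⁻¹‖ ≤ ‖b‖ ^ (dk k - 1) / ‖b.det‖ := by simpa using b.l2_opNorm_inv_le
    _ ≤ (M + ‖lam‖) ^ (dk k - 1) / r ^ dk k := by gcongr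
    _ ≤ (M + ‖lam‖) ^ (d - 1) / r ^ d := pow_sub_one_div_pow_le_of_le hr hrM hn (hdk k)
    _ = r⁻¹ ^ d * 1 * 1 * (M + ‖lam‖) ^ (d - 1) := by rw [inv_pow]; ring
    _ ≤ r⁻¹ ^ d * Real.sqrt d * (Nat.factorial (d - 1)) * (M + ‖lam‖) ^ (d - 1) := by gcongr

/-- Uniform bound on resolvents of matrices of uniformly bounded size: if `a k ∈ M_{d_k}(ℂ)` with
`d_k ≤ d`, `‖a k‖ ≤ M`, and `λ` is at distance at least `r > 0` from every spectrum `sp(a k)`,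
then `‖(a k - λ)⁻¹‖ ≤ r⁻ᵈ √d (d-1)! (M + |λ|)^{d-1}` for all `k` (operator norm). -/
theorem resolvent_uniform_bound
    (d : ℕ) (hd : 1 ≤ d) (dk : ℕ → ℕ) (hdk : ∀ k, dk k ≤ d)
    (a : ∀ k, Matrix (Fin (dk k)) (Fin (dk k)) ℂ)
    (r M : ℝ) (lam : ℂ) (hr : 0 < r)
    (hdist : ∀ k, ∀ z ∈ spectrum ℂ (a k), r ≤ ‖lam - z‖)
    (hM : ∀ k, ‖a k‖ ≤ M) :
    ∀ k, ‖Ring.inverse (a k - algebraMap ℂ _ lam)‖ ≤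
      r⁻¹ ^ d * Real.sqrt d * (Nat.factorial (d - 1)) * (M + ‖lam‖) ^ (d - 1) :=
  resolvent_uniform_bound_general d dk hdk a r M lam hr hdist hM
end

section
/- Let $G$ be a self-similar subgroup of $\mathrm{Aut}(\mathcal{T}_2)$ acting on the binary rooted tree. If there exist a vertex $v$ of the first level and a nontrivial $g \in G$ fixing pointwise the subtree $v\mathcal{T}_2$, and an element $h \in G$ swapping the two first-level vertices, then the element $M = (1-g)(1-hgh^{-1})$ of the group algebra $\mathbb{C}G$ is nonzero but acts as zero on $\ell^2(\mathcal{T}_2^0)$. -/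
/-- An automorphism of the `d`-regular rooted tree, viewed as a permutation of the vertex set
`(Fin d)*` preserving lengths and the parent relation. -/
def IsTreeAut {d : ℕ} (g : Equiv.Perm (List (Fin d))) : Prop :=
  (∀ v : List (Fin d), (g v).length = v.length) ∧
  (∀ (v : List (Fin d)) (x : Fin d), ∃ y : Fin d, g (v ++ [x]) = g v ++ [y])

/-!
The elements `g` and `g' = h g h⁻¹` are disjoint permutations of the tree: `g` fixes the subtree
at `v` pointwise, and `g'` fixes the subtree at the other first-level vertex `u`, because `h⁻¹`
carries that subtree into the one at `v`. For disjoint `a, b` the vector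
`(1 - a)(1 - b) δ_z = δ_z - δ_{bz} - δ_{az} + δ_{abz}` vanishes: if `b` moves `z` then `a` fixes
both `z` and `bz`. On the other hand `1, a, b, ab` are distinct when `a, b ≠ 1` and `ab ≠ 1`, so
the coefficient of `ab` in `(1 - a)(1 - b)` is `1`; disjointness gives `ab ≠ 1`.
-/

open Equiv MonoidAlgebra

namespace MonoidAlgebra

variable {k : Type*} [Ring k]

theorem one_sub_of_mul_one_sub_of {G : Type*} [Monoid G] (a b : G) :
    (1 - of k G a) * (1 - of k G b) =
      single 1 1 - single b 1 - single a 1 + single (a * b) 1 := by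
  simp only [sub_mul, mul_sub, one_mul, mul_one, of_apply, single_mul_single, one_def]
  abel

theorem one_sub_of_mul_one_sub_of_ne_zero {G : Type*} [Group G] [Nontrivial k] {a b : G}
    (ha : a ≠ 1) (hb : b ≠ 1) (hab : a * b ≠ 1) : (1 - of k G a) * (1 - of k G b) ≠ 0 := by
  intro h0
  have := congrArg (fun x : MonoidAlgebra k G => x.coeff (a * b)) h0
  rw [one_sub_of_mul_one_sub_of] at this
  simp [coeff_single, ha, hb, hab] at this

variable {α : Type*} [DecidableEq α]

/-- `x • δ_z` for the permutation representation of `k[Perm α]` on functions `α → k`. -/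
def permActDirac (x : MonoidAlgebra k (Perm α)) (z : α) : α → k :=
  x.coeff.sum fun σ c => c • Pi.single (σ z) 1

theorem permActDirac_one_sub_of_mul_one_sub_of {a b : Perm α} (hab : a.Disjoint b) (z : α) :
    permActDirac ((1 - of k _ a) * (1 - of k _ b)) z = 0 := by
  rw [permActDirac, ← Finsupp.linearCombination_apply, one_sub_of_mul_one_sub_of]
  simp only [coeff_add, coeff_sub, coeff_single, map_add, map_sub,
    Finsupp.linearCombination_single, one_smul]
  rw [Perm.one_apply, Perm.mul_apply]
  by_cases hb : b z = z
  · rw [hb]; abel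
  · have ha : a z = z := (hab z).resolve_right hb
    have hab' : a (b z) = b z := (hab (b z)).resolve_right (b.injective.ne hb)
    rw [ha, hab']; abel

end MonoidAlgebra

namespace IsTreeAut

variable {d : ℕ} {f : Perm (List (Fin d))}

theorem apply_nil (hf : IsTreeAut f) : f [] = [] :=
  List.length_eq_zero_iff.mp (hf.1 [])

theorem exists_apply_append (hf : IsTreeAut f) (u w : List (Fin d)) :
    ∃ w', f (u ++ w) = f u ++ w' := by
  induction w using List.reverseRecOn with
  | nil => exact ⟨[], by simp⟩
  | append_singleton w x ih =>
    obtain ⟨w', hw'⟩ := ih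
    obtain ⟨y, hy⟩ := hf.2 (u ++ w) x
    exact ⟨w' ++ [y], by rw [← List.append_assoc, hy, hw', List.append_assoc]⟩

theorem exists_apply_cons (hf : IsTreeAut f) {i j : Fin d} (hij : f [i] = [j])
    (w : List (Fin d)) : ∃ w', f (i :: w) = j :: w' := by
  simpa [hij] using hf.exists_apply_append [i] w

end IsTreeAut

theorem conj_apply_cons_eq_self {d : ℕ} {g h : Perm (List (Fin d))} (hh : IsTreeAut h⁻¹)
    {u v : Fin d} (hvu : h [v] = [u]) (hgfix : ∀ w, g (v :: w) = v :: w) (w : List (Fin d)) :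
    (h * g * h⁻¹) (u :: w) = u :: w := by
  have huv : h⁻¹ [u] = [v] := by rw [Perm.inv_eq_iff_eq, hvu]
  obtain ⟨w', hw'⟩ := hh.exists_apply_cons huv w
  rw [Perm.mul_apply, Perm.mul_apply, hw', hgfix, ← hw']
  exact h.apply_symm_apply _

theorem disjoint_conj_of_fixes_subtree {g h : Perm (List (Fin 2))} (hg : IsTreeAut g)
    (hh : IsTreeAut h⁻¹) {u v : Fin 2} (huv : u ≠ v) (hvu : h [v] = [u])
    (hgfix : ∀ w, g (v :: w) = v :: w) : g.Disjoint (h * g * h⁻¹) := by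
  rintro (_ | ⟨i, w⟩)
  · exact .inl hg.apply_nil
  · obtain rfl | rfl : i = v ∨ i = u := by omega
    · exact .inl (hgfix w)
    · exact .inr (conj_apply_cons_eq_self hh hvu hgfix w)

theorem nonzero_kernel_element_binary_tree_general
    (G : Subgroup (Equiv.Perm (List (Fin 2))))
    (hGaut : ∀ f ∈ G, IsTreeAut f)
    (v : Fin 2) (g : Equiv.Perm (List (Fin 2))) (hgG : g ∈ G) (hg1 : g ≠ 1)
    (hgfix : ∀ w : List (Fin 2), g (v :: w) = v :: w)
    (h : Equiv.Perm (List (Fin 2))) (hhG : h ∈ G)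
    (hswap : h [0] = [1] ∧ h [1] = [0]) :
    ((1 - MonoidAlgebra.of ℂ _ g) * (1 - MonoidAlgebra.of ℂ _ (h * g * h⁻¹)) ≠ 0) ∧
    (∀ z : List (Fin 2),
      (((1 - MonoidAlgebra.of ℂ _ g) *
          (1 - MonoidAlgebra.of ℂ _ (h * g * h⁻¹))).coeff.sum
        fun σ c => c • (Pi.single (σ z) 1 : List (Fin 2) → ℂ)) = 0) := by
  obtain ⟨u, huv, hvu⟩ : ∃ u, u ≠ v ∧ h [v] = [u] := by
    fin_cases v
    exacts [⟨1, by decide, hswap.1⟩, ⟨0, by decide, hswap.2⟩]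
  have hdisj : g.Disjoint (h * g * h⁻¹) :=
    disjoint_conj_of_fixes_subtree (hGaut g hgG) (hGaut _ (inv_mem hhG)) huv hvu hgfix
  have hconj : h * g * h⁻¹ ≠ 1 := conj_eq_one_iff.not.mpr hg1
  refine ⟨one_sub_of_mul_one_sub_of_ne_zero hg1 hconj ?_,
    permActDirac_one_sub_of_mul_one_sub_of hdisj⟩
  exact hdisj.mul_eq_one_iff.not.mpr (fun h1 => hg1 h1.1)

/-- Let `G` be a self-similar group of automorphisms of the binary rooted tree. If a nontrivial
`g ∈ G` fixes pointwise the subtree rooted at a first-level vertex `v`, and `h ∈ G` swaps the two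
first-level vertices, then `M = (1-g)(1-hgh⁻¹) ∈ ℂG` is nonzero but acts as zero on
`ℓ²(𝒯₂⁰)` (it kills every Dirac function `δ_z`). -/
theorem nonzero_kernel_element_binary_tree
    (G : Subgroup (Equiv.Perm (List (Fin 2))))
    (hGaut : ∀ f ∈ G, IsTreeAut f)
    (hself : ∀ f ∈ G, ∀ i : Fin 2, ∃ f' ∈ G, ∀ w : List (Fin 2), f (i :: w) = f [i] ++ f' w)
    (v : Fin 2) (g : Equiv.Perm (List (Fin 2))) (hgG : g ∈ G) (hg1 : g ≠ 1)
    (hgfix : ∀ w : List (Fin 2), g (v :: w) = v :: w)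
    (h : Equiv.Perm (List (Fin 2))) (hhG : h ∈ G)
    (hswap : h [0] = [1] ∧ h [1] = [0]) :
    ((1 - MonoidAlgebra.of ℂ _ g) * (1 - MonoidAlgebra.of ℂ _ (h * g * h⁻¹)) ≠ 0) ∧
    (∀ z : List (Fin 2),
      (((1 - MonoidAlgebra.of ℂ _ g) *
          (1 - MonoidAlgebra.of ℂ _ (h * g * h⁻¹))).coeff.sum
        fun σ c => c • (Pi.single (σ z) 1 : List (Fin 2) → ℂ)) = 0) :=
  nonzero_kernel_element_binary_tree_general G hGaut v g hgG hg1 hgfix h hhG hswap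
end

section
/- Let $g_1, g_2, g_3$ be pairwise commuting nontrivial elements of a group $G$. If $(1-g_1)(1-g_2)(1-g_3) = 0$ in the group algebra $\mathbb{C}G$, then $g_1, g_2, g_3$ each have order $2$ and $g_1 g_2 g_3 = 1$. -/
/-!
Expanding, `(1 - g₁)(1 - g₂)(1 - g₃) = 0` says that the formal sums `1 + g₁g₂ + g₁g₃ + g₂g₃`
and `g₁ + g₂ + g₃ + g₁g₂g₃` agree in `ℂG`, hence (in characteristic zero) so do the multisets
`{1, g₁g₂, g₁g₃, g₂g₃}` and `{g₁, g₂, g₃, g₁g₂g₃}`. As no `gᵢ` is trivial, matching `1` forces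
`g₁g₂g₃ = 1`, and matching each `gᵢ` forces it to be the product of the other two. Then
`g₁² = g₁g₂g₃ = 1`, `g₃² = g₁g₂g₃ = 1` and, since `g₂` and `g₃` commute, `g₂² = g₁g₃g₂ = 1`.
-/

namespace MonoidAlgebra

variable {k G : Type*} [Semiring k] [MulOneClass G]

theorem coeff_sum_map_of_apply [DecidableEq G] (s : Multiset G) (x : G) :
    (s.map (of k G)).sum.coeff x = s.count x := by
  induction s using Multiset.induction with
  | empty => simp
  | cons a s ih =>
    rw [Multiset.map_cons, Multiset.sum_cons, coeff_add, Finsupp.add_apply, ih, of_apply,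
      coeff_single, Finsupp.single_apply, Multiset.count_cons]
    obtain rfl | hx := eq_or_ne a x <;> simp [*, add_comm, Ne.symm]

theorem sum_map_of_injective [CharZero k] :
    Function.Injective fun s : Multiset G => (s.map (of k G)).sum := by
  classical
  intro s t h
  ext x
  exact_mod_cast (coeff_sum_map_of_apply s x).symm.trans
    ((congrArg (fun y => y.coeff x) h).trans (coeff_sum_map_of_apply t x))

end MonoidAlgebra

theorem one_sub_mul_one_sub_mul_one_sub {R : Type*} [Ring R] (a b c : R) :
    (1 - a) * (1 - b) * (1 - c) = (1 + a * b + a * c + b * c) - (a + b + c + a * b * c) := by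
  noncomm_ring

theorem mul_eq_of_multiset_eq {G : Type*} [Group G] {a b c : G} (ha : a ≠ 1) (hb : b ≠ 1)
    (hc : c ≠ 1) (h : ({1, a * b, a * c, b * c} : Multiset G) = {a, b, c, a * b * c}) :
    a * b * c = 1 ∧ b * c = a ∧ a * c = b ∧ a * b = c := by
  have mem : ∀ x, x ∈ ({1, a * b, a * c, b * c} : Multiset G) ↔
      x ∈ ({a, b, c, a * b * c} : Multiset G) := fun x => by rw [h]
  have h1 := (mem 1).1 (by simp)
  have ha' := (mem a).2 (by simp)
  have hb' := (mem b).2 (by simp)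
  have hc' := (mem c).2 (by simp)
  simp [ha, hb, hc, ha.symm, hb.symm, hc.symm, eq_comm] at h1 ha' hb' hc'
  exact ⟨h1, ha'.symm, hb'.symm, hc'.symm⟩

theorem order_two_of_product_eq_zero_general {G : Type*} [Group G] (g₁ g₂ g₃ : G)
    (h1 : g₁ ≠ 1) (h2 : g₂ ≠ 1) (h3 : g₃ ≠ 1)
    (hc23 : Commute g₂ g₃)
    (hzero : (1 - MonoidAlgebra.of ℂ G g₁) * (1 - MonoidAlgebra.of ℂ G g₂) *
      (1 - MonoidAlgebra.of ℂ G g₃) = 0) :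
    orderOf g₁ = 2 ∧ orderOf g₂ = 2 ∧ orderOf g₃ = 2 ∧ g₁ * g₂ * g₃ = 1 := by
  rw [one_sub_mul_one_sub_mul_one_sub, sub_eq_zero] at hzero
  have hsum : (({1, g₁ * g₂, g₁ * g₃, g₂ * g₃} : Multiset G).map (MonoidAlgebra.of ℂ G)).sum =
      (({g₁, g₂, g₃, g₁ * g₂ * g₃} : Multiset G).map (MonoidAlgebra.of ℂ G)).sum := by
    simpa [add_assoc, MonoidAlgebra.one_def] using hzero
  obtain ⟨h123, h23, h13, h12⟩ :=
    mul_eq_of_multiset_eq h1 h2 h3 (MonoidAlgebra.sum_map_of_injective hsum)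
  have sq1 : g₁ ^ 2 = 1 := by rw [sq]; nth_rw 2 [← h23]; rw [← mul_assoc, h123]
  have sq2 : g₂ ^ 2 = 1 := by
    rw [sq]; nth_rw 1 [← h13]; rw [mul_assoc, ← hc23.eq, ← mul_assoc, h123]
  have sq3 : g₃ ^ 2 = 1 := by rw [sq]; nth_rw 1 [← h12]; exact h123
  exact ⟨orderOf_eq_prime sq1 h1, orderOf_eq_prime sq2 h2, orderOf_eq_prime sq3 h3, h123⟩

/-- If `g₁, g₂, g₃` are pairwise commuting nontrivial elements of a group `G` and
`(1-g₁)(1-g₂)(1-g₃) = 0` in `ℂG`, then each `gᵢ` has order `2` and `g₁g₂g₃ = 1`. -/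
theorem order_two_of_product_eq_zero {G : Type*} [Group G] (g₁ g₂ g₃ : G)
    (h1 : g₁ ≠ 1) (h2 : g₂ ≠ 1) (h3 : g₃ ≠ 1)
    (hc12 : Commute g₁ g₂) (hc13 : Commute g₁ g₃) (hc23 : Commute g₂ g₃)
    (hzero : (1 - MonoidAlgebra.of ℂ G g₁) * (1 - MonoidAlgebra.of ℂ G g₂) *
      (1 - MonoidAlgebra.of ℂ G g₃) = 0) :
    orderOf g₁ = 2 ∧ orderOf g₂ = 2 ∧ orderOf g₃ = 2 ∧ g₁ * g₂ * g₃ = 1 :=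
  order_two_of_product_eq_zero_general g₁ g₂ g₃ h1 h2 h3 hc23 hzero
end

section
/- Let $G$ be a self-similar subgroup of $\mathrm{Aut}(\mathcal{T}_3)$ acting transitively on every level of the ternary rooted tree. Then $G$ has no nontrivial normal subgroup in which every nontrivial element has order $2$. -/
/-! A nontrivial involution `h` in `G` fixes some vertex `u` and moves a child of it, so it acts on
the three children of `u` as a transposition with a unique fixed child `uz`. By level
transitivity some `g ∈ G` sends a moved child `ux` to `uz`; then `k = g h g⁻¹` sends `uz` to a
child that is not fixed by `h`. Hence `h` and `k` do not commute, although both lie in the normal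
subgroup, which has exponent two and is therefore abelian. -/

theorem Fin.existsUnique_isFixedPt_of_involutive {σ : Fin 3 → Fin 3}
    (hσ : Function.Involutive σ) {x : Fin 3} (hx : σ x ≠ x) :
    ∃! z, Function.IsFixedPt σ z := by
  have key : ∀ σ : Fin 3 → Fin 3, ∀ x, (∀ c, σ (σ c) = c) → σ x ≠ x →
      ∃ z, σ z = z ∧ ∀ y, σ y = y → y = z := by
    decide
  exact key σ x hσ hx

namespace IsTreeAut

variable {d : ℕ} {g : Equiv.Perm (List (Fin d))}

theorem apply_nil_s12 (hg : IsTreeAut g) : g [] = [] :=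
  List.eq_nil_of_length_eq_zero (hg.1 [])

theorem exists_forall_apply_append_singleton (hg : IsTreeAut g) {u : List (Fin d)} (hu : g u = u) :
    ∃ σ : Fin d → Fin d, ∀ c, g (u ++ [c]) = u ++ [σ c] := by
  choose σ hσ using hg.2 u
  exact ⟨σ, fun c => by rw [hσ c, hu]⟩

theorem apply_eq_of_apply_append_singleton (hg : IsTreeAut g) {u : List (Fin d)} {x y : Fin d}
    (h : g (u ++ [x]) = u ++ [y]) : g u = u := by
  obtain ⟨y', hy'⟩ := hg.2 u x
  exact (List.append_inj (hy'.symm.trans h) (hg.1 u)).1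

theorem exists_apply_eq_and_apply_append_singleton_ne (hg : IsTreeAut g) {v : List (Fin d)}
    (hv : g v ≠ v) : ∃ u x, g u = u ∧ g (u ++ [x]) ≠ u ++ [x] := by
  induction v using List.reverseRecOn with
  | nil => exact absurd hg.apply_nil_s12 hv
  | append_singleton w x ih =>
    by_cases hw : g w = w
    · exact ⟨w, x, hw, hv⟩
    · exact ih hw

end IsTreeAut

theorem exists_not_commute_conj {G : Subgroup (Equiv.Perm (List (Fin 3)))}
    (hGaut : ∀ f ∈ G, IsTreeAut f)
    (htrans : ∀ v w : List (Fin 3), v.length = w.length → ∃ f ∈ G, f v = w)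
    {h : Equiv.Perm (List (Fin 3))} (hG : h ∈ G) (hsq : h * h = 1) (h1 : h ≠ 1) :
    ∃ g ∈ G, ¬ Commute h (g * h * g⁻¹) := by
  obtain ⟨v, hv⟩ : ∃ v, h v ≠ v := by
    by_contra! hfix
    exact h1 (Equiv.ext hfix)
  obtain ⟨u, x, hu, hx⟩ := (hGaut h hG).exists_apply_eq_and_apply_append_singleton_ne hv
  obtain ⟨σ, hσ⟩ := (hGaut h hG).exists_forall_apply_append_singleton hu
  have hσinv : Function.Involutive σ := fun c => by
    have hhc : h (h (u ++ [c])) = u ++ [c] := by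
      rw [← Equiv.Perm.mul_apply, hsq, Equiv.Perm.one_apply]
    simpa [hσ] using hhc
  have hσx : σ x ≠ x := fun hfix => hx (by rw [hσ, hfix])
  obtain ⟨z, hz, hz_unique⟩ := Fin.existsUnique_isFixedPt_of_involutive hσinv hσx
  obtain ⟨g, hgG, hgx⟩ := htrans (u ++ [x]) (u ++ [z]) (by simp)
  obtain ⟨τ, hτ⟩ := (hGaut g hgG).exists_forall_apply_append_singleton
    ((hGaut g hgG).apply_eq_of_apply_append_singleton hgx)
  refine ⟨g, hgG, fun hcomm => hσx ?_⟩
  have hginv : g⁻¹ (u ++ [z]) = u ++ [x] := Equiv.Perm.inv_eq_iff_eq.mpr hgx.symm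
  have hk : (g * h * g⁻¹) (u ++ [z]) = u ++ [τ (σ x)] := by
    rw [Equiv.Perm.mul_apply, Equiv.Perm.mul_apply, hginv, hσ, hτ]
  -- `k = g h g⁻¹` commutes with `h`, so it maps the fixed child `uz` of `h` to a fixed child
  have hfix : Function.IsFixedPt σ (τ (σ x)) := by
    have := congrArg (· (u ++ [z])) hcomm.eq
    rw [Equiv.Perm.mul_apply, Equiv.Perm.mul_apply _ h, hσ z, hz, hk, hσ] at this
    simpa [Function.IsFixedPt] using this
  have hτσx : τ (σ x) = τ x := by
    rw [hz_unique _ hfix]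
    simpa [hτ] using hgx.symm
  have : g (u ++ [σ x]) = g (u ++ [x]) := by rw [hτ, hτ, hτσx]
  simpa using g.injective this

theorem Subgroup.commute_of_forall_sq_eq_one {M : Type*} [Group M] {H : Subgroup M}
    (hH : ∀ x ∈ H, x ^ 2 = 1) {x y : M} (hx : x ∈ H) (hy : y ∈ H) : Commute x y := by
  have hcomm : Commute (⟨x, hx⟩ : H) ⟨y, hy⟩ :=
    Commute.of_orderOf_dvd_two (fun a => orderOf_dvd_of_pow_eq_one (Subtype.ext (hH a a.2))) _ _
  exact hcomm.map H.subtype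

theorem no_normal_elementary_two_subgroup_general
    (G : Subgroup (Equiv.Perm (List (Fin 3))))
    (hGaut : ∀ f ∈ G, IsTreeAut f)
    (htrans : ∀ v w : List (Fin 3), v.length = w.length → ∃ f ∈ G, f v = w) :
    ∀ H : Subgroup G, H.Normal → (∀ x ∈ H, x ^ 2 = 1) → H = ⊥ := by
  intro H hN hsq
  refine (Subgroup.eq_bot_iff_forall H).mpr fun a ha => by_contra fun ha1 => ?_
  obtain ⟨g, hgG, hncomm⟩ := exists_not_commute_conj hGaut htrans a.2
    (by simpa [sq] using congrArg G.subtype (hsq a ha)) (by simpa using ha1)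
  have hconj : ⟨g, hgG⟩ * a * ⟨g, hgG⟩⁻¹ ∈ H := hN.conj_mem a ha _
  exact hncomm ((Subgroup.commute_of_forall_sq_eq_one hsq ha hconj).map G.subtype)

/-- A self-similar group of automorphisms of the ternary rooted tree acting transitively on every
level has no nontrivial normal subgroup all of whose elements have order dividing `2`. -/
theorem no_normal_elementary_two_subgroup
    (G : Subgroup (Equiv.Perm (List (Fin 3))))
    (hGaut : ∀ f ∈ G, IsTreeAut f)
    (hself : ∀ f ∈ G, ∀ i : Fin 3, ∃ f' ∈ G, ∀ w : List (Fin 3), f (i :: w) = f [i] ++ f' w)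
    (htrans : ∀ v w : List (Fin 3), v.length = w.length → ∃ f ∈ G, f v = w) :
    ∀ H : Subgroup G, H.Normal → (∀ x ∈ H, x ^ 2 = 1) → H = ⊥ :=
  no_normal_elementary_two_subgroup_general G hGaut htrans
end

section
/- Let $G$ be a countable group acting on a countable set $X$ such that for every finite subset $F \subseteq G$ not containing the identity, there exists $x \in X$ with $f \cdot x \neq x$ for all $f \in F$. Then the left regular representation of $G$ is weakly contained in the permutation representation of $G$ on $\ell^2(X)$. -/
open scoped BigOperators Pointwise

/-- The `ℓ²` norm of a finitely supported function. -/
noncomputable def l2Norm {Y : Type*} (f : Y →₀ ℂ) : ℝ :=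
  Real.sqrt (∑ y ∈ f.support, ‖f y‖ ^ 2)

/-- The action of a group algebra element `a ∈ ℂG` on a finitely supported function on a `G`-set
`X` (the permutation representation `ρ` extended to `ℂG`). -/
noncomputable def permAction {G : Type*} [Group G] {X : Type*} [MulAction G X]
    (a : MonoidAlgebra ℂ G) (η : X →₀ ℂ) : X →₀ ℂ :=
  a.coeff.sum fun g c => c • Finsupp.mapDomain (fun x => g • x) η

/-! If the orbit map `g ↦ g • x` is injective on the supports of `ξ` and `a * ξ`, it carries `ξ`
to a vector of `ℓ²(X)` of the same norm and intertwines `λ(a)` with `ρ(a)`, so the bound for `ρ(a)`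
transfers to `λ(a)ξ`. The freeness hypothesis, applied to `S⁻¹S \ {1}` for a finite `S ⊆ G`,
provides such a point `x`. -/

lemma l2Norm_mapDomain_of_injOn {Y Z : Type*} {φ : Y → Z} {f : Y →₀ ℂ}
    (h : Set.InjOn φ f.support) :
    l2Norm (Finsupp.mapDomain φ f) = l2Norm f := by
  classical
  unfold l2Norm
  rw [Finsupp.mapDomain_support_of_injOn f h, Finset.sum_image fun y hy z hz => h hy hz]
  congr 1
  refine Finset.sum_congr rfl fun y hy => ?_
  rw [Finsupp.mapDomain_apply' (↑f.support) f subset_rfl h hy]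

lemma permAction_mapDomain_orbit {G X : Type*} [Group G] [MulAction G X]
    (a ξ : MonoidAlgebra ℂ G) (x : X) :
    permAction a (Finsupp.mapDomain (fun g : G => g • x) ξ.coeff)
      = Finsupp.mapDomain (fun g : G => g • x) (a * ξ).coeff := by
  rw [MonoidAlgebra.mul_def, MonoidAlgebra.coeff_finsuppSum, Finsupp.mapDomain_sum]
  refine Finsupp.sum_congr fun g _ => ?_
  rw [MonoidAlgebra.coeff_finsuppSum, Finsupp.mapDomain_sum, ← Finsupp.mapDomain_comp,
    Finsupp.mapDomain, Finsupp.smul_sum]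
  refine Finsupp.sum_congr fun h _ => ?_
  rw [MonoidAlgebra.coeff_single, Finsupp.mapDomain_single]
  simp [Function.comp, mul_smul, Finsupp.smul_single, smul_eq_mul]

lemma exists_injOn_orbit_map {G X : Type*} [Group G] [MulAction G X]
    (hfree : ∀ F : Finset G, (1 : G) ∉ F → ∃ x : X, ∀ f ∈ F, f • x ≠ x) (S : Finset G) :
    ∃ x : X, Set.InjOn (fun g : G => g • x) S := by
  classical
  obtain ⟨x, hx⟩ := hfree ((S⁻¹ * S).erase 1) (Finset.notMem_erase 1 _)
  refine ⟨x, fun g hg h hh hgh => ?_⟩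
  by_contra hne
  refine hx (g⁻¹ * h) (Finset.mem_erase.2 ⟨?_, Finset.mul_mem_mul (Finset.inv_mem_inv hg) hh⟩) ?_
  · rwa [Ne, inv_mul_eq_one]
  · simp only at hgh
    rw [mul_smul, ← hgh, inv_smul_smul]

theorem regular_weakly_contained_in_permutation_general
    {G : Type*} [Group G] {X : Type*} [MulAction G X]
    (hfree : ∀ F : Finset G, (1 : G) ∉ F → ∃ x : X, ∀ f ∈ F, f • x ≠ x) :
    ∀ a : MonoidAlgebra ℂ G, ∀ C : ℝ, 0 ≤ C →
      (∀ η : X →₀ ℂ, l2Norm (permAction a η) ≤ C * l2Norm η) →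
      ∀ ξ : MonoidAlgebra ℂ G, l2Norm (a * ξ : MonoidAlgebra ℂ G).coeff ≤ C * l2Norm ξ.coeff := by
  intro a C _ hbound ξ
  classical
  obtain ⟨x, hinj⟩ := exists_injOn_orbit_map hfree ((a * ξ).coeff.support ∪ ξ.coeff.support)
  have hbound_orbit := hbound (Finsupp.mapDomain (fun g : G => g • x) ξ.coeff)
  rwa [permAction_mapDomain_orbit,
    l2Norm_mapDomain_of_injOn (hinj.mono (by simp)),
    l2Norm_mapDomain_of_injOn (hinj.mono (by simp))] at hbound_orbit

/-- If a countable group `G` acts on a countable set `X` so that every finite subset `F ⊆ G` with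
`1 ∉ F` is moved off some point of `X`, then the regular representation `λ` is weakly contained in
the permutation representation `ρ` on `ℓ²(X)`: every bound `‖ρ(a)η‖ ≤ C‖η‖` on finitely supported
vectors yields the corresponding bound `‖λ(a)ξ‖ ≤ C‖ξ‖` (note `λ(a)ξ = a * ξ` is convolution). -/
theorem regular_weakly_contained_in_permutation
    {G : Type*} [Group G] [Countable G] {X : Type*} [Countable X] [MulAction G X]
    (hfree : ∀ F : Finset G, (1 : G) ∉ F → ∃ x : X, ∀ f ∈ F, f • x ≠ x) :
    ∀ a : MonoidAlgebra ℂ G, ∀ C : ℝ, 0 ≤ C →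
      (∀ η : X →₀ ℂ, l2Norm (permAction a η) ≤ C * l2Norm η) →
      ∀ ξ : MonoidAlgebra ℂ G, l2Norm (a * ξ : MonoidAlgebra ℂ G).coeff ≤ C * l2Norm ξ.coeff :=
  regular_weakly_contained_in_permutation_general hfree
end
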